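/- Let 𝓘 be a maximal ideal independent family of infinite subsets of ℕ with |𝓘| < 2^ℵ₀. Then the set of those A ∈ 𝓘 for which the complemented filter 𝓕(𝓘, A) is not an ultrafilter is finite. -/

import Mathlib

open Cardinal Set Filter

/-- A family of subsets of ℕ is ideal independent if for every `A` in the family and
every finite subfamily `F` not containing `A`, the set `A \ ⋃ F` is infinite. -/
def IdealIndependent (I : Set (Set ℕ)) : Prop :=
  ∀ A ∈ I, ∀ F : Finset (Set ℕ), ↑F ⊆ I \ {A} → (A \ ⋃₀ ↑F).Infinite

/-- A maximal ideal independent family. -/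
def MaxIdealIndependent (I : Set (Set ℕ)) : Prop :=
  IdealIndependent I ∧ ∀ J : Set (Set ℕ), IdealIndependent J → I ⊆ J → J = I

/-- The complemented filter 𝓕(𝓘, A) of an ideal independent family `I` corresponding
to `A ∈ I`: the filter generated by the sets `A \ ⋃ F` for finite `F ⊆ I \ {A}`. -/
def complFilter (I : Set (Set ℕ)) (A : Set ℕ) : Filter ℕ :=
  Filter.generate { S | ∃ F : Finset (Set ℕ), ↑F ⊆ I \ {A} ∧ S = A \ ⋃₀ ↑F }

/-- A proper filter on ℕ which decides every subset of ℕ, i.e. an ultrafilter. -/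
def IsUltraOn (F : Filter ℕ) : Prop :=
  F ≠ ⊥ ∧ ∀ D : Set ℕ, D ∈ F ∨ Dᶜ ∈ F

/-!
If `𝓕(I, A)` is not an ultrafilter, then `A` has a splitting set `C`: one that meets every basic
set `A \ ⋃ F` of `𝓕(I, A)`, while the complement of `C` meets each of them in an infinite set.
A point of `A` lying in no other member of `I` is such a set; if there is none, any set left
undecided by `𝓕(I, A)` is one.

Given infinitely many members `A₀, A₁, …` of `I` with splitting sets, shrink these to pairwise
disjoint `Cₙ ⊆ Aₙ \ (A₀ ∪ ⋯ ∪ Aₙ₋₁)` and glue them along an almost disjoint family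
`(d x)_{x ∈ 2^ℕ}`: `B x = ⋃_{n ∈ d x} Cₙ`. Every `B x` is independent from `I`, and every `Aₙ` from
`B x`. Any other constraint `A \ (⋃ F ∪ B x)` is infinite for all but at most one `x`, because
`B x ∩ B y` is covered by finitely many `Aₙ`. There are fewer than `2^ℵ₀` constraints, so some
`B x` could be added to `I`, which contradicts maximality.
-/

theorem exists_almostDisjoint_family :
    ∃ d : (ℕ → Bool) → Set ℕ, (∀ x, (d x).Infinite) ∧ Pairwise fun x y => (d x ∩ d y).Finite := by
  -- `d x` codes the finite prefixes of `x`; `x ≠ y` share only prefixes up to their first difference.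
  let code (x : ℕ → Bool) (n : ℕ) : ℕ := Encodable.encode ((List.range n).map x)
  have code_eq {x y : ℕ → Bool} {n m : ℕ} (h : code x n = code y m) :
      n = m ∧ ∀ k < n, x k = y k := by
    have h := Encodable.encode_injective h
    have hnm : n = m := by simpa using congrArg List.length h
    refine ⟨hnm, fun k hk => ?_⟩
    simpa [List.getElem?_map, hk, hnm ▸ hk] using congrArg (·[k]?) h
  refine ⟨fun x => range (code x), fun x => infinite_range_of_injective
    fun n m h => (code_eq h).1, fun x y hxy => ?_⟩
  obtain ⟨N, hN⟩ := Function.ne_iff.1 hxy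
  refine ((finite_Iic N).image (code x)).subset ?_
  rintro _ ⟨⟨n, rfl⟩, m, hm⟩
  obtain ⟨hmn, hag⟩ := code_eq hm
  exact ⟨n, not_lt.1 fun hNn : N < n => hN (hag N (by omega)).symm, rfl⟩

theorem exists_forall_not_of_mk_lt {κ : Type} (P : κ → (ℕ → Bool) → Prop)
    (hκ : #κ < 2 ^ ℵ₀) (hP : ∀ k, {x | P k x}.Subsingleton) : ∃ x, ∀ k, ¬ P k x := by
  by_contra! h
  choose f hf using h
  have : #(ℕ → Bool) ≤ #κ :=
    mk_le_of_injective (f := f) fun x y hxy => hP (f x) (hf x) (by rw [hxy]; exact hf y)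
  exact this.not_gt (by simpa using hκ)

theorem mk_finset_subset_le {α : Type*} (s : Set α) :
    #{F : Finset α // ↑F ⊆ s} ≤ max ℵ₀ #s := by
  classical
  have hsurj : Function.Surjective fun G : Finset s =>
      (⟨G.map (Function.Embedding.subtype _), by simp⟩ : {F : Finset α // ↑F ⊆ s}) := by
    rintro ⟨F, hF⟩
    exact ⟨F.subtype (· ∈ s), Subtype.ext (by simpa [Finset.subtype_map] using fun a ha => hF ha)⟩
  exact (mk_le_of_surjective hsurj).trans
    ((mk_le_of_surjective List.toFinset_surjective).trans (mk_list_le_max s))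

section IdealIndependent

variable {I : Set (Set ℕ)} {A B : Set ℕ}

theorem idealIndependent_insert
    (hB : ∀ F : Finset (Set ℕ), ↑F ⊆ I → (B \ ⋃₀ ↑F).Infinite)
    (hIB : ∀ A ∈ I, ∀ F : Finset (Set ℕ), ↑F ⊆ I \ {A} → (A \ (⋃₀ ↑F ∪ B)).Infinite) :
    IdealIndependent (insert B I) := by
  classical
  intro A hA F hF
  by_cases hAB : A = B
  · subst hAB
    exact hB F fun C hC => ((hF hC).1.resolve_left (hF hC).2)
  · refine (hIB A (hA.resolve_left hAB) (F.erase B) fun C hC => ?_).mono ?_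
    · obtain ⟨hCB, hCF⟩ := Finset.mem_erase.1 hC
      exact ⟨(hF hCF).1.resolve_left hCB, (hF hCF).2⟩
    · refine sdiff_subset_sdiff_right fun p ⟨C, hCF, hpC⟩ => ?_
      by_cases hCB : C = B
      · exact Or.inr (hCB ▸ hpC)
      · exact Or.inl ⟨C, Finset.mem_erase.2 ⟨hCB, hCF⟩, hpC⟩

theorem MaxIdealIndependent.false_of_forall_infinite (hI : MaxIdealIndependent I)
    (hB : ∀ F : Finset (Set ℕ), ↑F ⊆ I → (B \ ⋃₀ ↑F).Infinite)
    (hIB : ∀ A ∈ I, ∀ F : Finset (Set ℕ), ↑F ⊆ I \ {A} → (A \ (⋃₀ ↑F ∪ B)).Infinite) :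
    False := by
  have hBI : B ∈ I := hI.2 _ (idealIndependent_insert hB hIB) (subset_insert B I) ▸ mem_insert B I
  simpa using hIB B hBI ∅ (by simp)

theorem mem_complFilter_of_subset {F : Finset (Set ℕ)} {T : Set ℕ} (hF : ↑F ⊆ I \ {A})
    (hT : A \ ⋃₀ ↑F ⊆ T) : T ∈ complFilter I A :=
  mem_of_superset (mem_generate_of_mem ⟨F, hF, rfl⟩) hT

theorem IdealIndependent.complFilter_neBot (hI : IdealIndependent I) (hA : A ∈ I) :
    (complFilter I A).NeBot := by
  classical
  refine generate_neBot_iff.2 fun t ht htfin => ?_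
  choose! G hGI hG using fun S (hS : S ∈ t) => ht hS
  obtain ⟨p, hp⟩ := (hI A hA (htfin.toFinset.biUnion G) (by simpa using hGI)).nonempty
  refine ⟨p, fun S hS => ?_⟩
  rw [hG S hS]
  exact ⟨hp.1, fun ⟨C, hC, hpC⟩ => hp.2 ⟨C, by simpa using ⟨S, hS, hC⟩, hpC⟩⟩

end IdealIndependent

def IsSplitting (I : Set (Set ℕ)) (A C : Set ℕ) : Prop :=
  ∀ F : Finset (Set ℕ), ↑F ⊆ I \ {A} → ((A \ ⋃₀ ↑F) ∩ C).Nonempty ∧ (A \ (⋃₀ ↑F ∪ C)).Infinite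

section IsSplitting

variable {I : Set (Set ℕ)} {A C : Set ℕ}

theorem exists_finset_subset_sUnion (hA : ∀ e ∈ A, ∃ C ∈ I, C ≠ A ∧ e ∈ C) {E : Set ℕ}
    (hE : E.Finite) (hEA : E ⊆ A) : ∃ G : Finset (Set ℕ), ↑G ⊆ I \ {A} ∧ E ⊆ ⋃₀ ↑G := by
  classical
  choose! g hgI hgA hg using fun e (he : e ∈ E) => hA e (hEA he)
  refine ⟨hE.toFinset.image g, ?_, fun e he => ⟨g e, by simpa using ⟨e, he, rfl⟩, hg e he⟩⟩
  simpa [Set.subset_def] using fun e he => ⟨hgI e he, hgA e he⟩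

theorem IdealIndependent.exists_isSplitting (hI : IdealIndependent I) (hA : A ∈ I)
    (h : ¬ IsUltraOn (complFilter I A)) : ∃ C, IsSplitting I A C := by
  classical
  by_cases hpriv : ∃ e ∈ A, ∀ C ∈ I, C ≠ A → e ∉ C
  · obtain ⟨e, heA, he⟩ := hpriv
    refine ⟨{e}, fun F hF => ⟨⟨e, ⟨heA, fun ⟨C, hCF, heC⟩ => ?_⟩, rfl⟩, ?_⟩⟩
    · exact he C (hF hCF).1 (hF hCF).2 heC
    · rw [← sdiff_sdiff]
      exact (hI A hA F hF).sdiff (finite_singleton e)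
  push Not at hpriv
  obtain ⟨X, hX, hXc⟩ : ∃ X, X ∉ complFilter I A ∧ Xᶜ ∉ complFilter I A := by
    simpa [IsUltraOn, (hI.complFilter_neBot hA).ne] using h
  refine ⟨X, fun F hF => ⟨?_, fun hfin => ?_⟩⟩
  · by_contra hempty
    exact hXc (mem_complFilter_of_subset hF fun p hp hpX => hempty ⟨p, hp, hpX⟩)
  · obtain ⟨G, hG, hcover⟩ := exists_finset_subset_sUnion hpriv hfin sdiff_subset
    refine hX (mem_complFilter_of_subset (F := F ∪ G) (by simpa using ⟨hF, hG⟩) ?_)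
    intro p ⟨hpA, hpFG⟩
    by_contra hpX
    simp only [Finset.coe_union, sUnion_union, mem_union, not_or] at hpFG
    exact hpFG.2 (hcover ⟨hpA, fun h => h.elim hpFG.1 hpX⟩)

theorem IsSplitting.inter_diff_sUnion (h : IsSplitting I A C) {G : Finset (Set ℕ)}
    (hG : ↑G ⊆ I \ {A}) : IsSplitting I A (C ∩ (A \ ⋃₀ ↑G)) := by
  classical
  intro F hF
  obtain ⟨⟨p, ⟨hpA, hpFG⟩, hpC⟩, -⟩ := h (F ∪ G) (by simpa using ⟨hF, hG⟩)
  simp only [Finset.coe_union, sUnion_union, mem_union, not_or] at hpFG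
  refine ⟨⟨p, ⟨hpA, hpFG.1⟩, hpC, hpA, hpFG.2⟩, (h F hF).2.mono ?_⟩
  exact sdiff_subset_sdiff_right (union_subset_union_right _ inter_subset_left)

end IsSplitting

theorem coe_image_range_subset {I : Set (Set ℕ)} {A : ℕ → Set ℕ} (hAI : ∀ n, A n ∈ I)
    (hA : Function.Injective A) (n : ℕ) : ↑((Finset.range n).image A) ⊆ I \ {A n} := by
  intro B hB
  obtain ⟨m, hm, rfl⟩ := Finset.mem_image.1 hB
  exact ⟨hAI m, fun hmn => (Finset.mem_range.1 hm).ne (hA hmn)⟩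

structure SplitSequence (I : Set (Set ℕ)) where
  A : ℕ → Set ℕ
  C : ℕ → Set ℕ
  mem : ∀ n, A n ∈ I
  injective : Function.Injective A
  isSplitting : ∀ n, IsSplitting I (A n) (C n)
  subset : ∀ n, C n ⊆ A n
  disjoint : ∀ {m n}, m < n → Disjoint (C n) (A m)

namespace SplitSequence

variable {I : Set (Set ℕ)} (S : SplitSequence I)

theorem nonempty_of_infinite (h : {A ∈ I | ∃ C, IsSplitting I A C}.Infinite) :
    Nonempty (SplitSequence I) := by
  classical
  let A (n : ℕ) : Set ℕ := h.natEmbedding _ n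
  have hAinj : Function.Injective A := fun m n hmn =>
    (h.natEmbedding _).injective (Subtype.ext hmn)
  have hA (n : ℕ) : A n ∈ I ∧ ∃ C, IsSplitting I (A n) C := (h.natEmbedding _ n).2
  choose hAI C hC using hA
  refine ⟨⟨A, fun n => C n ∩ (A n \ ⋃₀ ↑((Finset.range n).image A)), hAI, hAinj,
    fun n => (hC n).inter_diff_sUnion (coe_image_range_subset hAI hAinj n),
    fun n => inter_subset_right.trans sdiff_subset,
    fun {m n} hmn => disjoint_left.2 fun p hp hpm => hp.2.2 ⟨A m, ?_, hpm⟩⟩⟩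
  simpa using ⟨m, hmn, rfl⟩

theorem pairwise_disjoint : Pairwise fun m n => Disjoint (S.C m) (S.C n) := by
  intro m n hmn
  rcases hmn.lt_or_gt with h | h
  · exact (S.disjoint h).symm.mono_left (S.subset m)
  · exact (S.disjoint h).mono_right (S.subset n)

def glue (d : Set ℕ) : Set ℕ := ⋃ n ∈ d, S.C n

theorem glue_inter_glue (d d' : Set ℕ) : S.glue d ∩ S.glue d' = S.glue (d ∩ d') := by
  ext p
  simp only [glue, mem_inter_iff, mem_iUnion, exists_prop]
  constructor
  · rintro ⟨⟨m, hm, hpm⟩, n, hn, hpn⟩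
    obtain rfl : m = n := by_contra fun hmn => disjoint_left.1 (S.pairwise_disjoint hmn) hpm hpn
    exact ⟨m, ⟨hm, hn⟩, hpm⟩
  · rintro ⟨n, ⟨hn, hn'⟩, hp⟩
    exact ⟨⟨n, hn, hp⟩, n, hn', hp⟩

theorem infinite_glue_diff {d : Set ℕ} (hd : d.Infinite) {F : Finset (Set ℕ)} (hF : ↑F ⊆ I) :
    (S.glue d \ ⋃₀ ↑F).Infinite := by
  have hN : {n | S.A n ∈ F}.Finite := F.finite_toSet.preimage S.injective.injOn
  have hpt (n : ↥(d \ {n | S.A n ∈ F})) : ∃ p ∈ S.C n, p ∉ ⋃₀ ↑F := by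
    have hFn : ↑F ⊆ I \ {S.A n} := fun B hB =>
      ⟨hF hB, fun h => n.2.2 (show S.A n ∈ F from mem_singleton_iff.1 h ▸ hB)⟩
    obtain ⟨p, ⟨-, hpF⟩, hpC⟩ := (S.isSplitting n F hFn).1
    exact ⟨p, hpC, hpF⟩
  choose pt hptC hptF using hpt
  have := (hd.sdiff hN).to_subtype
  refine infinite_of_injective_forall_mem (f := pt) (fun k l hkl => Subtype.ext ?_)
    fun k => ⟨mem_biUnion k.2.1 (hptC k), hptF k⟩
  by_contra hkl'
  exact disjoint_left.1 (S.pairwise_disjoint hkl') (hptC k) (hkl ▸ hptC l)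

theorem infinite_diff_glue (j : ℕ) {F : Finset (Set ℕ)} (hF : ↑F ⊆ I \ {S.A j}) (d : Set ℕ) :
    (S.A j \ (⋃₀ ↑F ∪ S.glue d)).Infinite := by
  classical
  refine (S.isSplitting j (F ∪ (Finset.range j).image S.A) ?_).2.mono ?_
  · rw [Finset.coe_union]
    exact union_subset hF (coe_image_range_subset S.mem S.injective j)
  rintro p ⟨hpA, hp⟩
  refine ⟨hpA, ?_⟩
  rintro (hpF | hpd)
  · exact hp (Or.inl (sUnion_mono (by simp) hpF))
  obtain ⟨n, hn, hpn⟩ := mem_iUnion₂.1 hpd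
  rcases lt_trichotomy n j with h | rfl | h
  · exact hp (Or.inl ⟨S.A n, by simpa using Or.inr ⟨n, h, rfl⟩, S.subset n hpn⟩)
  · exact hp (Or.inr hpn)
  · exact disjoint_left.1 (S.disjoint h) hpn hpA

theorem subsingleton_setOf_finite_diff_glue (hI : IdealIndependent I) {d : (ℕ → Bool) → Set ℕ}
    (hd : Pairwise fun x y => (d x ∩ d y).Finite) {A : Set ℕ} (hA : A ∈ I)
    {F : Finset (Set ℕ)} (hF : ↑F ⊆ I \ {A}) :
    {x | (A \ (⋃₀ ↑F ∪ S.glue (d x))).Finite}.Subsingleton := by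
  classical
  intro x hx y hy
  by_contra hxy
  by_cases hAS : A ∈ range S.A
  · obtain ⟨j, rfl⟩ := hAS
    exact S.infinite_diff_glue j hF (d x) hx
  have hdxy := hd hxy
  refine hI A hA (F ∪ hdxy.toFinset.image S.A) ?_ ((hx.union hy).subset ?_)
  · rw [Finset.coe_union, Finset.coe_image]
    exact union_subset hF (image_subset_iff.2 fun n _ => ⟨S.mem n, fun h => hAS ⟨n, h⟩⟩)
  rintro p ⟨hpA, hpG⟩
  have hpF : p ∉ ⋃₀ ↑F := fun h => hpG (sUnion_mono (by simp) h)
  have hpxy : p ∉ S.glue (d x) ∩ S.glue (d y) := by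
    rw [glue_inter_glue]
    intro hp
    obtain ⟨n, hn, hpn⟩ := mem_iUnion₂.1 hp
    exact hpG ⟨S.A n, by simpa using Or.inr ⟨n, hn, rfl⟩, S.subset n hpn⟩
  rcases not_and_or.1 hpxy with h | h
  · exact Or.inl ⟨hpA, not_or.2 ⟨hpF, h⟩⟩
  · exact Or.inr ⟨hpA, not_or.2 ⟨hpF, h⟩⟩

end SplitSequence

theorem MaxIdealIndependent.finite_setOf_isSplitting {I : Set (Set ℕ)}
    (hI : MaxIdealIndependent I) (hcard : #I < 2 ^ ℵ₀) :
    {A ∈ I | ∃ C, IsSplitting I A C}.Finite := by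
  by_contra hinf
  obtain ⟨S⟩ := SplitSequence.nonempty_of_infinite hinf
  obtain ⟨d, hd_inf, hd⟩ := exists_almostDisjoint_family
  have hκ : #(I × {F : Finset (Set ℕ) // ↑F ⊆ I}) < 2 ^ ℵ₀ := by
    rw [mk_prod, lift_id, lift_id]
    exact mul_lt_of_lt (cantor ℵ₀).le hcard
      ((mk_finset_subset_le I).trans_lt (max_lt (cantor ℵ₀) hcard))
  obtain ⟨x, hx⟩ := exists_forall_not_of_mk_lt
    (fun (k : I × {F : Finset (Set ℕ) // ↑F ⊆ I}) x =>
      ↑k.2.1 ⊆ I \ {k.1.1} ∧ (k.1.1 \ (⋃₀ ↑k.2.1 ∪ S.glue (d x))).Finite) hκ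
    fun ⟨⟨A, hA⟩, F, _⟩ x ⟨hF, hx⟩ y ⟨_, hy⟩ =>
      S.subsingleton_setOf_finite_diff_glue hI.1 hd hA hF hx hy
  exact hI.false_of_forall_infinite (fun F hF => S.infinite_glue_diff (hd_inf x) hF)
    fun A hA F hF hfin => hx ⟨⟨A, hA⟩, F, hF.trans sdiff_subset⟩ ⟨hF, hfin⟩

/-- If `I` is a maximal ideal independent family of cardinality `< 2^ℵ₀`, then for all
but finitely many `A ∈ I` the complemented filter `𝓕(I, A)` is an ultrafilter. -/
theorem finitely_many_non_ultra (I : Set (Set ℕ)) (hI : MaxIdealIndependent I)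
    (hcard : #I < 2 ^ aleph0) :
    { A ∈ I | ¬ IsUltraOn (complFilter I A) }.Finite :=
  (hI.finite_setOf_isSplitting hcard).subset fun _ ⟨hA, h⟩ => ⟨hA, hI.1.exists_isSplitting hA h⟩
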